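/- arXiv:1306.3170 — 2 statements merged into one kernel-verified Lean document; each statement's English description precedes it below -/
import Mathlib

section
/- There is an isometric embedding of ℤ into the Farey graph: there exists a map f : ℤ → Option ℚ such that for all integers m and n, the graph distance in F between f m and f n equals |m − n|. (In particular F contains a bi-infinite geodesic and has infinite diameter.) -/
/-- The Farey graph on vertex set `Option ℚ`, where `none` represents `∞ = 1/0`.
Two distinct rationals `a`, `b` are adjacent iff `|a.num * b.den - b.num * a.den| = 1`;
`∞` is adjacent to a rational `a` iff `a.den = 1`. -/
def Farey : SimpleGraph (Option ℚ) where
  Adj u v :=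
    match u, v with
    | none, none => False
    | none, some a => a.den = 1
    | some a, none => a.den = 1
    | some a, some b => a ≠ b ∧ |a.num * (b.den : ℤ) - b.num * (a.den : ℤ)| = 1
  symm := by
    refine ⟨?_⟩
    intro u v h
    match u, v with
    | none, some a => exact h
    | some a, none => exact h
    | some a, some b =>
      refine ⟨h.1.symm, ?_⟩
      rw [abs_sub_comm]
      exact h.2
  loopless := by
    refine ⟨?_⟩
    intro u h
    match u with
    | none => exact h
    | some a => exact h.1 rfl

/-!
Write `F j` for the Fibonacci numbers extended to all `j : ℤ`. The points `F (j + 1) / F j` form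
a ladder in the Farey graph: each is adjacent to the next two. Farey edges do not cross: if `v`
and `v'` lie on different sides of an edge `{u, w}`, the Plücker relation
`det u w * det v v' = det u v' * det v w - det u v * det v' w` writes `|det v v'|` as a sum of
two positive integers. So each rung `{F (i + 1) / F i, F (i + 2) / F (i + 1)}` separates the
earlier points of the ladder from the later ones, and a walk from the `a`-th point to the `b`-th
one meets the `(a + 1)`-st or the `(a + 2)`-nd after at least one step. By induction its length is
at least `(b - a) / 2`, and `n ↦ F (2n + 1) / F (2n)` is an isometric embedding.
-/

namespace SimpleGraph

variable {V : Type*} {G : SimpleGraph V} {f : ℤ → V}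

lemma exists_walk_length_eq_of_adj_succ (hadj : ∀ n, G.Adj (f n) (f (n + 1))) (m : ℤ)
    (k : ℕ) :
    ∃ p : G.Walk (f m) (f (m + k)), p.length = k := by
  induction k with
  | zero => exact ⟨Walk.nil.copy rfl (by simp), by simp⟩
  | succ k ih =>
    obtain ⟨p, hp⟩ := ih
    exact ⟨(p.concat (hadj _)).copy rfl (by push_cast; ring_nf), by simp [hp]⟩

theorem dist_eq_abs_sub_of_adj_succ (hadj : ∀ n, G.Adj (f n) (f (n + 1)))
    (hlen : ∀ {m n} (p : G.Walk (f m) (f n)), n - m ≤ p.length) (m n : ℤ) :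
    (G.dist (f m) (f n) : ℤ) = |m - n| := by
  wlog hmn : m ≤ n generalizing m n
  · rw [dist_comm, abs_sub_comm]
    exact this n m (by omega)
  obtain ⟨k, rfl⟩ : ∃ k : ℕ, n = m + k := ⟨(n - m).toNat, by omega⟩
  obtain ⟨p, hp⟩ := exists_walk_length_eq_of_adj_succ hadj m k
  obtain ⟨q, hq⟩ := p.reachable.exists_walk_length_eq_dist
  have hle := hp ▸ dist_le p
  have hge := hq ▸ hlen q
  rw [show m - (m + k) = -k by ring, abs_neg, Nat.abs_cast]
  omega

end SimpleGraph

namespace Farey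

-- The factors are ordered as in `Farey`, so that adjacency of two rationals unfolds to `det`.
def det (u v : ℤ × ℤ) : ℤ := u.1 * v.2 - v.1 * u.2

/-- `side u w v * side u w v' < 0` says that `v` and `v'` lie on different arcs of
`ℙ¹(ℚ) ∖ {u, w}`; this product does not change when any of the vectors is negated. -/
def side (u w v : ℤ × ℤ) : ℤ := det u v * det v w

lemma det_self (u : ℤ × ℤ) : det u u = 0 := by
  simp only [det]; ring

lemma det_neg_left (u v : ℤ × ℤ) : det (-u) v = -det u v := by
  simp only [det, Prod.fst_neg, Prod.snd_neg]; ring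

lemma det_neg_right (u v : ℤ × ℤ) : det u (-v) = -det u v := by
  simp only [det, Prod.fst_neg, Prod.snd_neg]; ring

lemma two_le_abs_det_mul_det_of_side_mul_side_neg {u w v v' : ℤ × ℤ}
    (h : side u w v * side u w v' < 0) : 2 ≤ |det u w * det v v'| := by
  have plucker : det u w * det v v' = det u v' * det v w - det u v * det v' w := by
    simp only [det]; ring
  have hneg : (det u v' * det v w) * (det u v * det v' w) < 0 := by
    simp only [side] at h; linarith
  rw [plucker, le_abs]
  rcases mul_neg_iff.mp hneg with ⟨ha, hb⟩ | ⟨ha, hb⟩ <;> omega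

def vec : Option ℚ → ℤ × ℤ
  | none => (1, 0)
  | some a => (a.num, a.den)

lemma eq_of_det_vec_eq_zero {u v : Option ℚ} (h : det (vec u) (vec v) = 0) : u = v := by
  match u, v with
  | none, none => rfl
  | none, some b => simp [vec, det] at h
  | some a, none => simp [vec, det] at h
  | some a, some b =>
    simp only [vec, det] at h
    exact congrArg some (Rat.eq_iff_mul_eq_mul.mpr (by linarith))

lemma adj_iff_abs_det_vec_eq_one {u v : Option ℚ} :
    Farey.Adj u v ↔ |det (vec u) (vec v)| = 1 := by
  match u, v with
  | none, none => simp [Farey, vec, det]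
  | none, some b => simp [Farey, vec, det]
  | some a, none => simp [Farey, vec, det]
  | some a, some b =>
    refine ⟨And.right, fun h => ⟨?_, h⟩⟩
    rintro rfl
    rw [det_self, abs_zero] at h
    exact zero_ne_one h

def ofVec (v : ℤ × ℤ) : Option ℚ := if v.2 = 0 then none else some (v.1 / v.2)

lemma vec_some_div {p q : ℤ} (hq : 0 < q) (h : IsCoprime p q) :
    vec (some (p / q)) = (p, q) := by
  have hpq : Nat.Coprime p.natAbs q.natAbs := Int.isCoprime_iff_gcd_eq_one.mp h
  simp only [vec, Rat.num_div_eq_of_coprime hq hpq, Rat.den_div_eq_of_coprime hq hpq]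

lemma vec_ofVec {v : ℤ × ℤ} (hv : IsCoprime v.1 v.2) :
    vec (ofVec v) = v ∨ vec (ofVec v) = -v := by
  obtain ⟨p, q⟩ := v
  rcases lt_trichotomy q 0 with hq | rfl | hq
  · right
    have hdiv : ((p : ℚ) / q) = ((-p : ℤ) : ℚ) / ((-q : ℤ) : ℚ) := by push_cast; ring
    rw [ofVec, if_neg hq.ne, hdiv, vec_some_div (by omega) hv.neg_neg]
    rfl
  · rcases Int.isUnit_iff.mp (isCoprime_zero_right.mp hv) with rfl | rfl
    · left; rfl
    · right; rfl
  · left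
    rw [ofVec, if_neg hq.ne', vec_some_div hq hv]

lemma side_vec_ne_zero {u w v : Option ℚ} (hu : v ≠ u) (hw : v ≠ w) :
    side (vec u) (vec w) (vec v) ≠ 0 :=
  mul_ne_zero (fun h => hu (eq_of_det_vec_eq_zero h).symm) (fun h => hw (eq_of_det_vec_eq_zero h))

-- Farey edges do not cross.
lemma side_mul_side_nonneg_of_adj {u w v v' : Option ℚ} (huw : Farey.Adj u w)
    (hv : Farey.Adj v v') :
    0 ≤ side (vec u) (vec w) (vec v) * side (vec u) (vec w) (vec v') := by
  by_contra! h
  have := two_le_abs_det_mul_det_of_side_mul_side_neg h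
  rw [abs_mul, adj_iff_abs_det_vec_eq_one.mp huw, adj_iff_abs_det_vec_eq_one.mp hv] at this
  omega

lemma mem_support_of_side_mul_side_neg {u w y z : Option ℚ} (huw : Farey.Adj u w)
    (p : Farey.Walk y z) (h : side (vec u) (vec w) (vec y) * side (vec u) (vec w) (vec z) < 0) :
    u ∈ p.support ∨ w ∈ p.support := by
  induction p with
  | nil => nlinarith
  | @cons y y' z hy p ih =>
    rw [SimpleGraph.Walk.support_cons, List.mem_cons, List.mem_cons]
    by_cases hu : y' = u
    · exact Or.inl (Or.inr (hu ▸ p.start_mem_support))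
    by_cases hw : y' = w
    · exact Or.inr (Or.inr (hw ▸ p.start_mem_support))
    have hy' := side_vec_ne_zero hu hw
    have hyy' := side_mul_side_nonneg_of_adj huw hy
    generalize side (vec u) (vec w) (vec y) = a, side (vec u) (vec w) (vec y') = b,
      side (vec u) (vec w) (vec z) = c at h hy' hyy' ih
    have hbc : b * c < 0 := by
      rcases mul_neg_iff.mp h with ⟨ha, hc⟩ | ⟨ha, hc⟩ <;>
        rcases hy'.lt_or_gt with hb | hb <;> nlinarith
    have := ih hbc
    tauto

def fibStep : Equiv.Perm (ℤ × ℤ) where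
  toFun v := (v.1 + v.2, v.1)
  invFun v := (v.2, v.1 - v.2)
  left_inv v := by simp
  right_inv v := by simp

lemma det_fibStep (u v : ℤ × ℤ) : det (fibStep u) (fibStep v) = -det u v := by
  simp only [fibStep, Equiv.coe_fn_mk, det]; ring

lemma det_fibStep_symm (u v : ℤ × ℤ) : det (fibStep.symm u) (fibStep.symm v) = -det u v := by
  simp only [fibStep, Equiv.coe_fn_symm_mk, det]; ring

lemma det_fibStep_zpow (k : ℤ) (u v : ℤ × ℤ) :
    det ((fibStep ^ k) u) ((fibStep ^ k) v) = k.negOnePow * det u v := by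
  induction k using Int.induction_on generalizing u v with
  | zero => simp
  | succ k ih =>
    rw [zpow_add_one, Equiv.Perm.mul_apply, Equiv.Perm.mul_apply, ih, det_fibStep,
      Int.negOnePow_succ]
    push_cast; ring
  | pred k ih =>
    rw [zpow_sub_one, Equiv.Perm.mul_apply, Equiv.Perm.mul_apply, ih, Equiv.Perm.inv_def,
      det_fibStep_symm, Int.negOnePow_sub, Int.negOnePow_one]
    push_cast; ring

/-- `fibPair j = (F (j + 1), F j)`, with the Fibonacci numbers extended to `j : ℤ`. -/
def fibPair (j : ℤ) : ℤ × ℤ := (fibStep ^ j) (1, 0)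

lemma fibPair_add (j k : ℤ) : fibPair (j + k) = (fibStep ^ k) (fibPair j) := by
  rw [fibPair, fibPair, add_comm, zpow_add, Equiv.Perm.mul_apply]

lemma fibPair_add_one (j : ℤ) : fibPair (j + 1) = fibStep (fibPair j) := by
  rw [fibPair_add, zpow_one]

lemma abs_det_fibPair_add (j l k : ℤ) :
    |det (fibPair (j + k)) (fibPair (l + k))| = |det (fibPair j) (fibPair l)| := by
  rw [fibPair_add, fibPair_add, det_fibStep_zpow, abs_mul, Int.abs_negOnePow, one_mul]

lemma side_fibPair_add (i l a k : ℤ) :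
    side (fibPair (i + k)) (fibPair (l + k)) (fibPair (a + k)) =
      side (fibPair i) (fibPair l) (fibPair a) := by
  simp only [side, fibPair_add _ k, det_fibStep_zpow]
  rw [mul_mul_mul_comm, ← Units.val_mul, Int.units_mul_self, Units.val_one, one_mul]

lemma fibPair_zero : fibPair 0 = (1, 0) := rfl

lemma fibPair_one : fibPair 1 = (1, 1) := by
  rw [← zero_add 1, fibPair_add_one, fibPair_zero]; rfl

lemma fibPair_two : fibPair 2 = (2, 1) := by
  rw [show (2 : ℤ) = 1 + 1 by norm_num, fibPair_add_one, fibPair_one]; rfl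

lemma abs_det_fibPair_add_one (j : ℤ) : |det (fibPair j) (fibPair (j + 1))| = 1 := by
  have h := abs_det_fibPair_add 0 1 j
  rwa [zero_add, add_comm 1, fibPair_zero, fibPair_one] at h

lemma abs_det_fibPair_add_two (j : ℤ) : |det (fibPair j) (fibPair (j + 2))| = 1 := by
  have h := abs_det_fibPair_add 0 2 j
  rwa [zero_add, add_comm 2, fibPair_zero, fibPair_two] at h

lemma fibPair_sub_one (j : ℤ) : fibPair (j - 1) = fibStep.symm (fibPair j) := by
  rw [Equiv.eq_symm_apply, ← fibPair_add_one, sub_add_cancel]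

lemma side_fibPair_zero_one (v : ℤ × ℤ) :
    side (fibPair 0) (fibPair 1) v = v.2 * (v.1 - v.2) := by
  rw [fibPair_zero, fibPair_one, side, det, det]; ring

lemma side_fibPair_zero_one_pos {j : ℤ} (hj : 2 ≤ j) :
    0 < side (fibPair 0) (fibPair 1) (fibPair j) := by
  have key : 0 < (fibPair j).2 ∧ (fibPair j).2 < (fibPair j).1 := by
    induction j, hj using Int.leInduction with
    | base => rw [fibPair_two]; norm_num
    | succ j _ ih =>
      rw [fibPair_add_one]
      simp only [fibStep, Equiv.coe_fn_mk]
      omega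
  rw [side_fibPair_zero_one]
  exact mul_pos key.1 (by linarith [key.2])

lemma side_fibPair_zero_one_neg {j : ℤ} (hj : j ≤ -1) :
    side (fibPair 0) (fibPair 1) (fibPair j) < 0 := by
  have key : (fibPair j).1 * (fibPair j).2 ≤ 0 ∧ (fibPair j).2 ≠ 0 := by
    induction j, hj using Int.leInductionDown with
    | base => rw [show (-1 : ℤ) = 0 - 1 by norm_num, fibPair_sub_one, fibPair_zero]; decide
    | pred j _ ih =>
      rw [fibPair_sub_one]
      simp only [fibStep, Equiv.coe_fn_symm_mk]
      obtain ⟨hpq, hq⟩ := ih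
      refine ⟨by nlinarith [sq_nonneg (fibPair j).2], fun h => hq ?_⟩
      nlinarith [sq_nonneg (fibPair j).2]
  rw [side_fibPair_zero_one]
  nlinarith [sq_pos_of_ne_zero key.2]

lemma side_fibPair_mul_side_neg {a i b : ℤ} (ha : a < i) (hb : i + 1 < b) :
    side (fibPair i) (fibPair (i + 1)) (fibPair a) *
      side (fibPair i) (fibPair (i + 1)) (fibPair b) < 0 := by
  have translate (c : ℤ) : side (fibPair i) (fibPair (i + 1)) (fibPair c) =
      side (fibPair 0) (fibPair 1) (fibPair (c - i)) := by
    rw [← side_fibPair_add 0 1 (c - i) i, zero_add, add_comm 1, sub_add_cancel]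
  rw [translate, translate]
  exact mul_neg_of_neg_of_pos (side_fibPair_zero_one_neg (by omega))
    (side_fibPair_zero_one_pos (by omega))

lemma isCoprime_fibPair (j : ℤ) : IsCoprime (fibPair j).1 (fibPair j).2 := by
  rcases abs_eq_abs.mp ((abs_det_fibPair_add_one j).trans abs_one.symm) with h | h <;>
    simp only [det] at h
  · exact ⟨(fibPair (j + 1)).2, -(fibPair (j + 1)).1, by linarith⟩
  · exact ⟨-(fibPair (j + 1)).2, (fibPair (j + 1)).1, by linarith⟩

def fibPoint (j : ℤ) : Option ℚ := ofVec (fibPair j)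

lemma vec_fibPoint (j : ℤ) : vec (fibPoint j) = fibPair j ∨ vec (fibPoint j) = -fibPair j :=
  vec_ofVec (isCoprime_fibPair j)

lemma abs_det_vec_fibPoint (i j : ℤ) :
    |det (vec (fibPoint i)) (vec (fibPoint j))| = |det (fibPair i) (fibPair j)| := by
  rcases vec_fibPoint i with hi | hi <;> rcases vec_fibPoint j with hj | hj <;>
    simp only [hi, hj, det_neg_left, det_neg_right, abs_neg, neg_neg]

lemma side_vec_fibPoint_mul_side (i l a b : ℤ) :
    side (vec (fibPoint i)) (vec (fibPoint l)) (vec (fibPoint a)) *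
        side (vec (fibPoint i)) (vec (fibPoint l)) (vec (fibPoint b)) =
      side (fibPair i) (fibPair l) (fibPair a) * side (fibPair i) (fibPair l) (fibPair b) := by
  rcases vec_fibPoint i with hi | hi <;> rcases vec_fibPoint l with hl | hl <;>
    rcases vec_fibPoint a with ha | ha <;> rcases vec_fibPoint b with hb | hb <;>
    simp only [side, hi, hl, ha, hb, det_neg_left, det_neg_right] <;> ring

lemma adj_fibPoint_add_one (j : ℤ) : Farey.Adj (fibPoint j) (fibPoint (j + 1)) := by
  rw [adj_iff_abs_det_vec_eq_one, abs_det_vec_fibPoint, abs_det_fibPair_add_one]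

lemma adj_fibPoint_add_two (j : ℤ) : Farey.Adj (fibPoint j) (fibPoint (j + 2)) := by
  rw [adj_iff_abs_det_vec_eq_one, abs_det_vec_fibPoint, abs_det_fibPair_add_two]

lemma fibPoint_mem_support {a i b : ℤ} (p : Farey.Walk (fibPoint a) (fibPoint b))
    (ha : a < i) (hb : i + 1 < b) : fibPoint i ∈ p.support ∨ fibPoint (i + 1) ∈ p.support :=
  mem_support_of_side_mul_side_neg (adj_fibPoint_add_one i) p
    ((side_vec_fibPoint_mul_side ..).trans_lt (side_fibPair_mul_side_neg ha hb))

lemma fibPoint_ne {a c : ℤ} (h₁ : a < c) (h₂ : c ≤ a + 2) : fibPoint a ≠ fibPoint c := by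
  obtain rfl | rfl : c = a + 1 ∨ c = a + 2 := by omega
  exacts [(adj_fibPoint_add_one a).ne, (adj_fibPoint_add_two a).ne]

lemma sub_le_two_mul_length_walk_fibPoint {a b : ℤ} (p : Farey.Walk (fibPoint a) (fibPoint b)) :
    b - a ≤ 2 * p.length := by
  induction hd : (b - a).toNat using Nat.strong_induction_on generalizing a with
  | _ d ih =>
  have one_le_length {c : ℤ} (q : Farey.Walk (fibPoint a) (fibPoint c)) (h₁ : a < c)
      (h₂ : c ≤ a + 2) : 1 ≤ q.length :=
    SimpleGraph.Walk.not_nil_iff_lt_length.mp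
      (SimpleGraph.Walk.not_nil_of_ne (fibPoint_ne h₁ h₂))
  rcases le_or_gt b a with hba | hab
  · omega
  rcases le_or_gt b (a + 2) with hb | hb
  · have := one_le_length p hab hb
    omega
  have split {c : ℤ} (h₁ : a < c) (h₂ : c ≤ a + 2) (hc : fibPoint c ∈ p.support) :
      b - a ≤ 2 * p.length := by
    have hlen := congrArg SimpleGraph.Walk.length (p.take_spec hc)
    rw [SimpleGraph.Walk.length_append] at hlen
    have := one_le_length (p.takeUntil _ hc) h₁ h₂
    have := ih (b - c).toNat (by omega) (p.dropUntil _ hc) rfl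
    omega
  rcases fibPoint_mem_support p (i := a + 1) (by omega) (by omega) with h | h
  · exact split (by omega) (by omega) h
  · exact split (by omega) (by omega) h

end Farey

/-- There is an isometric embedding of ℤ into the Farey graph. -/
theorem farey_isometric_embedding_int :
    ∃ f : ℤ → Option ℚ,
      ∀ m n : ℤ, (Farey.dist (f m) (f n) : ℤ) = |m - n| := by
  refine ⟨fun n => Farey.fibPoint (2 * n), SimpleGraph.dist_eq_abs_sub_of_adj_succ ?_ ?_⟩
  · intro n
    simpa only [mul_add, mul_one] using Farey.adj_fibPoint_add_two (2 * n)
  · intro m n p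
    have := Farey.sub_le_two_mul_length_walk_fibPoint p
    omega
end

section
/- The set S of rational vertices of the Farey graph F lying in the interval [−1, 1] is convex: for any two rationals a and b with |a| ≤ 1 and |b| ≤ 1, there exists a walk in F from a to b whose length equals the graph distance in F between a and b and all of whose vertices are rationals lying in [−1, 1]. -/
/-!
The inversion `x ↦ 1/x` (with `0 ↔ ∞`) acts on homogeneous coordinates as a signed swap, so it
is an automorphism of the Farey graph, and it exchanges `[-1, 1]` with its complement. Folding the
complement onto `[-1, 1]` by it gives a retraction `fold` which sends every edge to an edge or a
vertex: an edge between `[-1, 1]` and its complement either issues from `±1`, which the inversion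
fixes, or is the edge `0 ∞`, which collapses. Such a retraction shortens walks, so it maps a
geodesic between two points of `[-1, 1]` to a geodesic inside `[-1, 1]`. The graph is connected
by Euclid's algorithm: every `p/q` with `q > 1` has a neighbour with smaller denominator.
-/

namespace SimpleGraph

variable {V W : Type*} {G : SimpleGraph V} {H : SimpleGraph W}

theorem Walk.exists_walk_of_adj_or_eq {f : V → W}
    (hf : ∀ ⦃x y⦄, G.Adj x y → f x = f y ∨ H.Adj (f x) (f y)) {u v : V} (p : G.Walk u v) :
    ∃ q : H.Walk (f u) (f v), q.length ≤ p.length ∧ q.support ⊆ p.support.map f := by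
  induction p with
  | nil => exact ⟨nil, le_rfl, by simp⟩
  | @cons x y z hxy p ih =>
    obtain ⟨q, hlen, hsupp⟩ := ih
    rcases hf hxy with heq | hadj
    · refine ⟨q.copy heq.symm rfl, ?_, ?_⟩
      · simp only [length_copy, length_cons]
        omega
      · simpa only [support_copy, support_cons, List.map_cons] using
          List.subset_cons_of_subset _ hsupp
    · refine ⟨cons hadj q, Nat.succ_le_succ hlen, ?_⟩
      simpa only [support_cons, List.map_cons] using List.cons_subset_cons _ hsupp

theorem Reachable.exists_walk_length_eq_dist_of_retraction {f : V → V}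
    (hf : ∀ ⦃x y⦄, G.Adj x y → f x = f y ∨ G.Adj (f x) (f y)) {u v : V} (hu : f u = u)
    (hv : f v = v) (h : G.Reachable u v) :
    ∃ p : G.Walk u v, p.length = G.dist u v ∧ ∀ w ∈ p.support, w ∈ Set.range f := by
  obtain ⟨p, hp⟩ := h.exists_walk_length_eq_dist
  obtain ⟨q, hlen, hsupp⟩ := p.exists_walk_of_adj_or_eq hf
  refine ⟨q.copy hu hv, ?_, fun w hw => ?_⟩
  · have := G.dist_le (q.copy hu hv)
    rw [Walk.length_copy] at this ⊢
    omega
  · rw [Walk.support_copy] at hw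
    obtain ⟨x, -, rfl⟩ := List.mem_map.mp (hsupp hw)
    exact ⟨x, rfl⟩

end SimpleGraph

namespace Farey

def coords : Option ℚ → ℤ × ℤ
  | none => (1, 0)
  | some a => (a.num, a.den)

def cross (x y : ℤ × ℤ) : ℤ := x.1 * y.2 - y.1 * x.2

theorem snd_eq_one_of_abs_cross_eq_one {x y : ℤ × ℤ} (hx : |x.1| ≤ x.2) (hy : y.2 < |y.1|)
    (hy₀ : 0 ≤ y.2) (hxy : |cross x y| = 1) : x.2 = 1 ∧ (y.2 = 0 ∨ |x.1| = 1) := by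
  obtain ⟨p, q⟩ := x
  obtain ⟨p', q'⟩ := y
  simp only [cross] at hx hy hy₀ hxy ⊢
  have hq : 0 ≤ q := (abs_nonneg p).trans hx
  have hle : |p'| * q - |p| * q' ≤ 1 := by
    calc |p'| * q - |p| * q' = |p' * q| - |p * q'| := by
          rw [abs_mul, abs_mul, abs_of_nonneg hq, abs_of_nonneg hy₀]
      _ ≤ |p' * q - p * q'| := abs_sub_abs_le_abs_sub _ _
      _ = 1 := by rw [abs_sub_comm, hxy]
  have hq1 : q ≤ 1 := by nlinarith [mul_le_mul_of_nonneg_right hx hy₀]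
  have hq0 : q ≠ 0 := by
    rintro rfl
    simp [abs_nonpos_iff.mp hx] at hxy
  obtain rfl : q = 1 := by omega
  refine ⟨rfl, ?_⟩
  rcases (abs_nonneg p).eq_or_lt with hp | hp
  · rw [← hp] at hle
    omega
  · omega

theorem adj_iff_abs_cross (u v : Option ℚ) :
    Farey.Adj u v ↔ |cross (coords u) (coords v)| = 1 := by
  rcases u with _ | a <;> rcases v with _ | b
  · simp [Farey, coords, cross]
  · simp [Farey, coords, cross]
  · simp [Farey, coords, cross]
  · refine ⟨And.right, fun h => ⟨?_, h⟩⟩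
    rintro rfl
    simp [coords, cross] at h

theorem coords_snd_nonneg (v : Option ℚ) : 0 ≤ (coords v).2 := by
  cases v <;> simp [coords]

def inv : Option ℚ → Option ℚ
  | none => some 0
  | some a => if a = 0 then none else some a⁻¹

theorem coords_inv (v : Option ℚ) :
    ∃ ε : ℤ, |ε| = 1 ∧ coords (inv v) = (ε * (coords v).2, ε * (coords v).1) := by
  rcases v with _ | a
  · exact ⟨1, by simp [inv, coords]⟩
  by_cases ha : a = 0
  · exact ⟨1, by simp [inv, coords, ha]⟩
  have hnum : a.num ≠ 0 := Rat.num_ne_zero.mpr ha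
  refine ⟨a.num.sign, by rw [Int.abs_eq_natAbs, Int.natAbs_sign_of_ne_zero hnum]; rfl, ?_⟩
  simp [inv, coords, ha, Rat.num_inv, Rat.den_inv, hnum]

theorem adj_inv {u v : Option ℚ} (h : Farey.Adj u v) : Farey.Adj (inv u) (inv v) := by
  obtain ⟨ε, hε, hu⟩ := coords_inv u
  obtain ⟨δ, hδ, hv⟩ := coords_inv v
  have hcross (x y : ℤ × ℤ) :
      cross (ε * x.2, ε * x.1) (δ * y.2, δ * y.1) = -(ε * δ) * cross x y := by
    simp only [cross]
    ring
  rw [adj_iff_abs_cross] at h ⊢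
  rw [hu, hv, hcross, abs_mul, abs_neg, abs_mul, hε, hδ, h, mul_one, mul_one]

def interval : Set (Option ℚ) := {v | ∃ c : ℚ, v = some c ∧ |c| ≤ 1}

theorem mem_interval_iff (v : Option ℚ) : v ∈ interval ↔ |(coords v).1| ≤ (coords v).2 := by
  rcases v with _ | a
  · simp [interval, coords]
  · simp only [interval, Set.mem_ofPred_eq, Option.some.injEq, exists_eq_left', coords]
    conv_lhs => rw [← Rat.num_div_den a]
    rw [abs_div, Nat.abs_cast, div_le_one (by positivity)]
    norm_cast

theorem inv_mem_interval {v : Option ℚ} (hv : v ∉ interval) : inv v ∈ interval := by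
  rw [mem_interval_iff] at hv ⊢
  obtain ⟨ε, hε, h⟩ := coords_inv v
  have hpos : 0 ≤ ε * (coords v).1 := by simpa [h] using coords_snd_nonneg (inv v)
  rw [h, abs_mul, hε, one_mul, abs_of_nonneg (coords_snd_nonneg v), ← abs_of_nonneg hpos,
    abs_mul, hε, one_mul]
  exact (not_le.mp hv).le

theorem inv_eq_self_or_inv_eq_of_adj {u v : Option ℚ} (h : Farey.Adj u v) (hu : u ∈ interval)
    (hv : v ∉ interval) : inv u = u ∨ inv v = u := by
  have hu' := (mem_interval_iff u).mp hu
  obtain ⟨a, rfl, -⟩ := hu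
  rw [adj_iff_abs_cross] at h
  rw [mem_interval_iff, not_le] at hv
  obtain ⟨hden, hv⟩ := snd_eq_one_of_abs_cross_eq_one hu' hv (coords_snd_nonneg v) h
  simp only [coords, Nat.cast_eq_one] at hu' hden
  have ha : (a.num : ℚ) = a := Rat.coe_int_num_of_den_eq_one hden
  by_cases hnum : |a.num| = 1
  · left
    rcases (abs_eq zero_le_one).mp hnum with h1 | h1 <;> rw [← ha, h1] <;> simp [inv]
  · right
    obtain rfl : v = none := by
      rcases v with _ | b
      · rfl
      · simp [coords, hnum] at hv
    have : a.num = 0 := abs_eq_zero.mp (by rw [hden] at hu'; have := abs_nonneg a.num; omega)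
    simp_all [inv]

open Classical in
noncomputable def fold (v : Option ℚ) : Option ℚ := if v ∈ interval then v else inv v

theorem fold_of_mem {v : Option ℚ} (hv : v ∈ interval) : fold v = v := if_pos hv

theorem fold_of_notMem {v : Option ℚ} (hv : v ∉ interval) : fold v = inv v := if_neg hv

theorem fold_mem_interval (v : Option ℚ) : fold v ∈ interval := by
  by_cases hv : v ∈ interval
  · rwa [fold_of_mem hv]
  · rw [fold_of_notMem hv]
    exact inv_mem_interval hv

theorem fold_adj_of_mem_of_notMem {u v : Option ℚ} (h : Farey.Adj u v) (hu : u ∈ interval)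
    (hv : v ∉ interval) : fold u = fold v ∨ Farey.Adj (fold u) (fold v) := by
  rw [fold_of_mem hu, fold_of_notMem hv]
  rcases inv_eq_self_or_inv_eq_of_adj h hu hv with hfix | hcollapse
  · exact Or.inr (hfix ▸ adj_inv h)
  · exact Or.inl hcollapse.symm

theorem fold_adj {u v : Option ℚ} (h : Farey.Adj u v) :
    fold u = fold v ∨ Farey.Adj (fold u) (fold v) := by
  by_cases hu : u ∈ interval <;> by_cases hv : v ∈ interval
  · rw [fold_of_mem hu, fold_of_mem hv]
    exact Or.inr h
  · exact fold_adj_of_mem_of_notMem h hu hv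
  · exact (fold_adj_of_mem_of_notMem h.symm hv hu).imp Eq.symm fun h => h.symm
  · rw [fold_of_notMem hu, fold_of_notMem hv]
    exact Or.inr (adj_inv h)

theorem exists_adj_den_lt (x : ℚ) (hx : x.den ≠ 1) :
    ∃ y : ℚ, Farey.Adj (some x) (some y) ∧ y.den < x.den := by
  obtain ⟨m, n, hmn⟩ : IsCoprime x.num x.den := Int.isCoprime_iff_gcd_eq_one.mpr x.reduced
  have hd : (0 : ℤ) < x.den := by exact_mod_cast x.pos
  -- reduce the Bézout coefficient `m` modulo the denominator
  obtain ⟨s, t, hst, hs0, hsd⟩ :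
      ∃ s t : ℤ, x.num * s - t * x.den = 1 ∧ 0 ≤ s ∧ s < x.den :=
    ⟨m % x.den, -(n + x.num * (m / x.den)),
      by linear_combination hmn + x.num * Int.emod_def m x.den,
      Int.emod_nonneg m hd.ne', Int.emod_lt_of_pos m hd⟩
  have hs : 0 < s := by
    refine hs0.lt_of_ne fun hs0 => hx ?_
    rw [← hs0] at hst
    exact_mod_cast Int.eq_one_of_mul_eq_one_left (a := -t) hd.le (by linear_combination hst)
  have hcop : Nat.Coprime t.natAbs s.natAbs :=
    Int.isCoprime_iff_gcd_eq_one.mp ⟨-x.den, x.num, by linear_combination hst⟩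
  have hnum := Rat.num_div_eq_of_coprime hs hcop
  have hden := Rat.den_div_eq_of_coprime hs hcop
  refine ⟨t / s, ?_, ?_⟩
  · rw [adj_iff_abs_cross]
    simp only [coords, cross, hnum, hden, hst, abs_one]
  · omega

theorem reachable_none (x : ℚ) : Farey.Reachable (some x) none := by
  induction hn : x.den using Nat.strong_induction_on generalizing x with
  | _ n ih =>
    by_cases h1 : x.den = 1
    · exact SimpleGraph.Adj.reachable (G := Farey) h1
    · obtain ⟨y, hxy, hy⟩ := exists_adj_den_lt x h1
      exact hxy.reachable.trans (ih _ (hn ▸ hy) y rfl)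

theorem connected : Farey.Connected := by
  have h (v : Option ℚ) : Farey.Reachable v none := by
    cases v with
    | none => rfl
    | some x => exact reachable_none x
  exact ⟨fun u v => (h u).trans (h v).symm⟩

end Farey

/-- The set of rational vertices of the Farey graph lying in $[-1,1]$ is convex:
any two such vertices are joined by a geodesic walk all of whose vertices are
rationals in $[-1,1]$. -/
theorem farey_interval_convex (a b : ℚ) (ha : |a| ≤ 1) (hb : |b| ≤ 1) :
    ∃ p : Farey.Walk (some a) (some b),
      p.length = Farey.dist (some a) (some b) ∧
      ∀ v ∈ p.support, ∃ c : ℚ, v = some c ∧ |c| ≤ 1 := by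
  obtain ⟨p, hp, hsupp⟩ :=
    (Farey.connected.preconnected (some a) (some b)).exists_walk_length_eq_dist_of_retraction
      (fun _ _ => Farey.fold_adj) (Farey.fold_of_mem ⟨a, rfl, ha⟩)
      (Farey.fold_of_mem ⟨b, rfl, hb⟩)
  refine ⟨p, hp, fun w hw => ?_⟩
  obtain ⟨x, rfl⟩ := hsupp w hw
  exact Farey.fold_mem_interval x
end
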